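/- Let W ⊆ ℝⁿ be convex with nonempty interior and let d ∈ W be a point at which W is locally strictly convex, meaning: there is a supporting hyperplane Π at d with Π ∩ W = {d}. If A is an affine subspace through d with A ∩ W = {d}, then A is contained in some hyperplane supporting W at d. -/

import Mathlib

open RealInnerProductSpace

/-!
A nonzero functional maximised over `W` at `d` is an open map, so `d` lies on the boundary of
`W`; as `A` meets `W` only at `d`, it misses the interior of `W`. Hahn–Banach separates the
interior of `W` from `A` by a nonzero functional `g`, which is bounded below on `A` and hence
constant there; since `d ∈ A ∩ W`, its level set through `d` supports `W` and contains `A`.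
-/

open Set

theorem IsMaxOn.notMem_interior {E : Type*} [TopologicalSpace E] [AddCommGroup E] [Module ℝ E]
    [ContinuousAdd E] [ContinuousSMul ℝ E] {f : StrongDual ℝ E} (hf : f ≠ 0) {s : Set E} {d : E}
    (hmax : IsMaxOn f s d) : d ∉ interior s := by
  intro hd
  have himage : f '' s ⊆ Iic (f d) := image_subset_iff.2 fun u hu ↦ isMaxOn_iff.1 hmax u hu
  have hlt : f d < f d := by
    rw [← mem_Iio, ← interior_Iic]
    exact interior_mono himage (f.isOpenMap_of_ne_zero hf |>.image_interior_subset s ⟨d, hd, rfl⟩)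
  exact lt_irrefl _ hlt

theorem AffineSubspace.apply_eq_of_forall_le_apply {E F : Type*} [AddCommGroup E] [Module ℝ E]
    [FunLike F E ℝ] [LinearMapClass F ℝ E ℝ] {g : F} {A : AffineSubspace ℝ E} {c : ℝ}
    (hle : ∀ b ∈ A, c ≤ g b) {a d : E} (ha : a ∈ A) (hd : d ∈ A) : g a = g d := by
  have hline : ∀ t : ℝ, c ≤ g d + t * (g a - g d) := fun t ↦ by
    simpa [map_sub, map_smul, mul_sub, add_comm] using hle _ (A.smul_vsub_vadd_mem t ha hd hd)
  by_contra hne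
  have := hline ((c - g d - 1) / (g a - g d))
  rw [div_mul_cancel₀ _ (sub_ne_zero.2 hne)] at this
  linarith

theorem Convex.exists_supporting_functional_of_affineSubspace {E : Type*} [TopologicalSpace E]
    [AddCommGroup E] [Module ℝ E] [IsTopologicalAddGroup E] [ContinuousSMul ℝ E] {W : Set E}
    (hW : Convex ℝ W) (hWint : (interior W).Nonempty) {d : E} (hd : d ∈ W)
    (hdint : d ∉ interior W) {A : AffineSubspace ℝ E} (hdA : d ∈ A)
    (hAW : (A : Set E) ∩ W ⊆ {d}) :
    ∃ g : StrongDual ℝ E, g ≠ 0 ∧ (∀ a ∈ A, g a = g d) ∧ ∀ u ∈ W, g u ≤ g d := by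
  have hdisj : Disjoint (interior W) (A : Set E) := disjoint_right.2 fun a haA haW ↦ by
    obtain rfl : a = d := hAW ⟨haA, interior_subset haW⟩
    exact hdint haW
  obtain ⟨g, c, hg, hgW, hgA⟩ :=
    geometric_hahn_banach_of_nonempty_interior hW A.convex hdisj hWint ⟨d, hdA⟩
  exact ⟨g, hg, fun a ha ↦ A.apply_eq_of_forall_le_apply hgA ha hdA,
    fun u hu ↦ (hgW u hu).trans (hgA d hdA)⟩

theorem affine_in_supporting_hyperplane {n : ℕ}
    (W : Set (EuclideanSpace ℝ (Fin n))) (hW : Convex ℝ W)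
    (hWint : (interior W).Nonempty) (d : EuclideanSpace ℝ (Fin n)) (hd : d ∈ W)
    (hlsc : ∃ f : EuclideanSpace ℝ (Fin n) →L[ℝ] ℝ, f ≠ 0 ∧
      (∀ u ∈ W, f u ≤ f d) ∧ {u | f u = f d} ∩ W = {d})
    (A : AffineSubspace ℝ (EuclideanSpace ℝ (Fin n))) (hdA : d ∈ A)
    (hAW : (A : Set (EuclideanSpace ℝ (Fin n))) ∩ W = {d}) :
    ∃ g : EuclideanSpace ℝ (Fin n) →L[ℝ] ℝ, g ≠ 0 ∧
      (A : Set (EuclideanSpace ℝ (Fin n))) ⊆ {u | g u = g d} ∧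
      ∀ u ∈ W, g u ≤ g d := by
  obtain ⟨f, hf, hfmax, -⟩ := hlsc
  have hdint : d ∉ interior W := IsMaxOn.notMem_interior hf (isMaxOn_iff.2 hfmax)
  exact hW.exists_supporting_functional_of_affineSubspace hWint hd hdint hdA hAW.subset
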